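/- Let U ⊆ A^{ℤ²} be an additive shift space and let Ω = {Ω(n)}_{n≥1} be an expanding system of finite subsets of ℤ². If limsup_{n→∞} |∂Ω(n)|/|Ω(n)| = 0, then h_Ω(U) ≤ h_r(U). -/

import Mathlib

open Filter
open scoped Classical

/-- The `m × n` rectangular lattice `Z_{m×n}(p)` with bottom-left corner `p`. -/
def Zrect (m n : ℕ) (p : ℤ × ℤ) : Finset (ℤ × ℤ) :=
  (Finset.range m ×ˢ Finset.range n).image (fun ab => (p.1 + (ab.1 : ℤ), p.2 + (ab.2 : ℤ)))

/-- The number of patterns of `U` seen on the finite window `L`. -/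
noncomputable def patternCount {A : Type*} (U : Set ((ℤ × ℤ) → A)) (L : Finset (ℤ × ℤ)) : ℕ :=
  Set.ncard ((fun x => fun p : L => x (p : ℤ × ℤ)) '' U)

/-- An additive shift space: nonempty, closed, translation invariant. -/
def IsShiftSpace {A : Type*} [TopologicalSpace A] (U : Set ((ℤ × ℤ) → A)) : Prop :=
  U.Nonempty ∧ IsClosed U ∧ ∀ v : ℤ × ℤ, ∀ x ∈ U, (fun p => x (p + v)) ∈ U

/-- An expanding system of finite sublattices of `ℤ²`. -/
def IsExpandingSystem (Ω : ℕ → Finset (ℤ × ℤ)) : Prop :=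
  (∀ n, Ω n ⊂ Ω (n + 1)) ∧ ∀ p : ℤ × ℤ, ∃ n, p ∈ Ω n

/-- The interior of a finite lattice. -/
def latInterior (L : Finset (ℤ × ℤ)) : Finset (ℤ × ℤ) :=
  L.filter (fun p => (p.1 + 1, p.2) ∈ L ∧ (p.1, p.2 + 1) ∈ L ∧ (p.1 + 1, p.2 + 1) ∈ L)

/-- The boundary of a finite lattice. -/
def latBoundary (L : Finset (ℤ × ℤ)) : Finset (ℤ × ℤ) := L \ latInterior L

/-- The rectangular entropy `h_r(U)`. -/
noncomputable def rectEntropy {A : Type*} (U : Set ((ℤ × ℤ) → A)) : ℝ :=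
  ⨅ mn : ℕ × ℕ, (1 / (((mn.1 + 1) * (mn.2 + 1) : ℕ) : ℝ)) *
    Real.log (patternCount U (Zrect (mn.1 + 1) (mn.2 + 1) (0, 0)))

/-- The entropy `h_Ω(U)` along an expanding system `Ω`. -/
noncomputable def entropyAlong {A : Type*} (U : Set ((ℤ × ℤ) → A)) (Ω : ℕ → Finset (ℤ × ℤ)) : ℝ :=
  Filter.limsup (fun n => (1 / ((Ω n).card : ℝ)) * Real.log (patternCount U (Ω n))) Filter.atTop

/-- `Ω_{k,l}(n)`: the union of grid rectangles `Z_{k×l}((ak,bl))` contained in `L`. -/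
noncomputable def gridPart (k l : ℕ) (L : Finset (ℤ × ℤ)) : Finset (ℤ × ℤ) :=
  L.filter (fun p => ∃ a b : ℤ,
    p ∈ Zrect k l ((k : ℤ) * a, (l : ℤ) * b) ∧ Zrect k l ((k : ℤ) * a, (l : ℤ) * b) ⊆ L)

/-- `β_{k,l}` : the size of the complement of the grid part. -/
noncomputable def betaKL (k l : ℕ) (L : Finset (ℤ × ℤ)) : ℕ := (L \ gridPart k l L).card

/-- `α_{k,l}` : the number of grid rectangles contained in `L`. -/
noncomputable def alphaKL (k l : ℕ) (L : Finset (ℤ × ℤ)) : ℕ :=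
  Set.ncard {ab : ℤ × ℤ | Zrect k l ((k : ℤ) * ab.1, (l : ℤ) * ab.2) ⊆ L}

/-- A tessellation of `ℤ²`. -/
def IsTessellation (T : Finset (ℤ × ℤ)) : Prop :=
  ∃ v : ℕ → ℤ × ℤ,
    (∀ i j : ℕ, i ≠ j → Disjoint (T.image (· + v i)) (T.image (· + v j))) ∧
    ∀ p : ℤ × ℤ, ∃ i : ℕ, p ∈ T.image (· + v i)

/-- Euclidean distance between points of `ℤ²`. -/
noncomputable def euclDist (p q : ℤ × ℤ) : ℝ :=
  Real.sqrt (((p.1 - q.1 : ℤ) : ℝ) ^ 2 + ((p.2 - q.2 : ℤ) : ℝ) ^ 2)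

/-- Block gluing with gap `M`. -/
def BlockGluingWithGap {A : Type*} (U : Set ((ℤ × ℤ) → A)) (M : ℕ) : Prop :=
  ∀ (m₁ n₁ m₂ n₂ : ℕ) (c₁ c₂ : ℤ × ℤ),
    (∀ p ∈ Zrect m₁ n₁ c₁, ∀ q ∈ Zrect m₂ n₂ c₂, (M : ℝ) ≤ euclDist p q) →
    ∀ x₁ ∈ U, ∀ x₂ ∈ U, ∃ x ∈ U,
      (∀ p ∈ Zrect m₁ n₁ c₁, x p = x₁ p) ∧ ∀ q ∈ Zrect m₂ n₂ c₂, x q = x₂ q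

/-- Block gluing. -/
def IsBlockGluing {A : Type*} (U : Set ((ℤ × ℤ) → A)) : Prop :=
  ∃ M : ℕ, 1 ≤ M ∧ BlockGluingWithGap U M

/-- A full shift on a sub-alphabet. -/
def IsFullShift {A : Type*} (U : Set ((ℤ × ℤ) → A)) : Prop :=
  ∃ B : Set A, U = {x | ∀ p : ℤ × ℤ, x p ∈ B}

/-- Shift of finite type. -/
def IsSFT {A : Type*} (U : Set ((ℤ × ℤ) → A)) : Prop :=
  ∃ (F : Finset (ℤ × ℤ)) (P : Set (F → A)),
    U = {x | ∀ v : ℤ × ℤ, (fun p : F => x (v + (p : ℤ × ℤ))) ∈ P}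

/-- `(i,j)` has horizontal length `m` in `L`. -/
def HasHorizLength (L : Finset (ℤ × ℤ)) (p : ℤ × ℤ) (m : ℕ) : Prop :=
  1 ≤ m ∧ (∃ c : ℤ × ℤ, p ∈ Zrect m 1 c ∧ Zrect m 1 c ⊆ L) ∧
    ∀ m' : ℕ, m < m' → ¬ ∃ c : ℤ × ℤ, p ∈ Zrect m' 1 c ∧ Zrect m' 1 c ⊆ L

/-- `(i,j)` has vertical length `m` in `L`. -/
def HasVertLength (L : Finset (ℤ × ℤ)) (p : ℤ × ℤ) (m : ℕ) : Prop :=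
  1 ≤ m ∧ (∃ c : ℤ × ℤ, p ∈ Zrect 1 m c ∧ Zrect 1 m c ⊆ L) ∧
    ∀ m' : ℕ, m < m' → ¬ ∃ c : ℤ × ℤ, p ∈ Zrect 1 m' c ∧ Zrect 1 m' c ⊆ L

noncomputable def betaHoriz (m : ℕ) (L : Finset (ℤ × ℤ)) : ℕ :=
  (L.filter (fun p => HasHorizLength L p m)).card

noncomputable def betaVert (m : ℕ) (L : Finset (ℤ × ℤ)) : ℕ :=
  (L.filter (fun p => HasVertLength L p m)).card

/-- The one-dimensional sublattice segment `{s • v : 0 ≤ s ≤ n-1}`. -/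
def lineSegment (v : ℤ × ℤ) (n : ℕ) : Finset (ℤ × ℤ) :=
  (Finset.range n).image (fun s : ℕ => ((s : ℤ) * v.1, (s : ℤ) * v.2))

/-- The projectional entropy along the one-dimensional sublattice generated by `v`. -/
noncomputable def projEntropy {A : Type*} (U : Set ((ℤ × ℤ) → A)) (v : ℤ × ℤ) : ℝ :=
  ⨅ n : ℕ, (1 / (n + 1 : ℝ)) * Real.log (patternCount U (lineSegment v (n + 1)))

/-- `ĥ⁽¹⁾(U)`: supremum of projectional entropies over one-dimensional sublattices. -/
noncomputable def hHatOne {A : Type*} (U : Set ((ℤ × ℤ) → A)) : ℝ :=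
  ⨆ v : {w : ℤ × ℤ // w ≠ 0}, projEntropy U (v : ℤ × ℤ)

/-- The horizontal golden-mean shift. -/
def goldenMeanShift : Set ((ℤ × ℤ) → Fin 2) :=
  {x | ∀ p : ℤ × ℤ, x p * x (p.1 + 1, p.2) = 0}

/-- The sequence `a_k`: `a_1 = 2`, `a_2 = 3`, `a_k = a_{k-1} + a_{k-2}`. -/
def aSeq : ℕ → ℕ
  | 0 => 1
  | 1 => 2
  | (k + 2) => aSeq (k + 1) + aSeq k


/-!
Cut `ℤ²` into the grid of rectangles `Z_{k×l}((ak, bl))`. A window `L` splits into the grid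
rectangles it contains, each carrying at most `Γ_{k×l}(U)` patterns by translation invariance,
and leftover points lying in grid rectangles that meet both `L` and its complement. Such a
rectangle contains an adjacent pair `u, u + e` (`e = (1,0)` or `(0,1)`) with exactly one point in
`L`. Charge the rectangle to `u` if `u ∈ L`, and otherwise to the last point `b` of the run of `L`
in direction `e` that starts at `u + e`; both are points of `∂L`, and the run start, hence the
rectangle, is recovered from `(b, e)`. So at most `3|∂L|` rectangles are mixed and
`log Γ(L) ≤ |L| (kl)⁻¹ log Γ_{k×l}(U) + 3kl |∂L| log N`. Dividing by `|L|` and using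
`|∂Ω(n)| / |Ω(n)| → 0` gives `h_Ω(U) ≤ (kl)⁻¹ log Γ_{k×l}(U)` for all `k, l`.
-/

open Finset

lemma mem_Zrect {m n : ℕ} {c p : ℤ × ℤ} :
    p ∈ Zrect m n c ↔ c.1 ≤ p.1 ∧ p.1 < c.1 + m ∧ c.2 ≤ p.2 ∧ p.2 < c.2 + n := by
  simp only [Zrect, mem_image, mem_product, mem_range, Prod.ext_iff]
  constructor
  · rintro ⟨⟨a, b⟩, ⟨ha, hb⟩, h1, h2⟩
    dsimp only at ha hb h1 h2
    omega
  · rintro ⟨h1, h2, h3, h4⟩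
    exact ⟨((p.1 - c.1).toNat, (p.2 - c.2).toNat), by omega, by omega, by omega⟩

lemma card_Zrect (m n : ℕ) (c : ℤ × ℤ) : #(Zrect m n c) = m * n := by
  rw [Zrect, card_image_of_injective, card_product, card_range, card_range]
  rintro ⟨a, b⟩ ⟨a', b'⟩ h
  simp only [Prod.ext_iff] at h ⊢
  omega

lemma Zrect_eq_image_add (m n : ℕ) (c : ℤ × ℤ) :
    Zrect m n c = (Zrect m n (0, 0)).image (· + c) := by
  rw [Zrect, Zrect, image_image]
  congr 1
  funext ab
  simp [Prod.ext_iff, add_comm]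

def gridCell (k l : ℕ) (ab : ℤ × ℤ) : Finset (ℤ × ℤ) :=
  Zrect k l ((k : ℤ) * ab.1, (l : ℤ) * ab.2)

def gridCellIndex (k l : ℕ) (p : ℤ × ℤ) : ℤ × ℤ := (p.1 / k, p.2 / l)

lemma mem_gridCell_iff {k l : ℕ} (hk : 0 < k) (hl : 0 < l) {ab p : ℤ × ℤ} :
    p ∈ gridCell k l ab ↔ gridCellIndex k l p = ab := by
  rw [gridCell, mem_Zrect, gridCellIndex, Prod.ext_iff, Int.ediv_eq_iff_of_pos (by omega),
    Int.ediv_eq_iff_of_pos (by omega)]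
  dsimp only
  rw [mul_comm (k : ℤ), mul_comm (l : ℤ), and_assoc]

section PatternCount

variable {A : Type*} {U : Set ((ℤ × ℤ) → A)}

def patternSet (U : Set ((ℤ × ℤ) → A)) (L : Finset (ℤ × ℤ)) : Set (L → A) :=
  (fun x p => x p) '' U

lemma patternCount_eq_ncard (L : Finset (ℤ × ℤ)) :
    patternCount U L = (patternSet U L).ncard := rfl

lemma patternCount_pos [Finite A] (hU : U.Nonempty) (L : Finset (ℤ × ℤ)) :
    0 < patternCount U L :=
  (Set.ncard_pos (Set.toFinite _)).2 (hU.image _)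

lemma patternCount_le_card_pow [Fintype A] (L : Finset (ℤ × ℤ)) :
    patternCount U L ≤ Fintype.card A ^ #L := by
  calc patternCount U L ≤ Nat.card (L → A) := Set.ncard_le_card _
    _ = Fintype.card A ^ #L := by simp

lemma patternCount_union_le [Finite A] (S T : Finset (ℤ × ℤ)) :
    patternCount U (S ∪ T) ≤ patternCount U S * patternCount U T := by
  rw [patternCount_eq_ncard, patternCount_eq_ncard, patternCount_eq_ncard, ← Set.ncard_prod]
  refine Set.ncard_le_ncard_of_injOn
    (fun y => (fun p => y ⟨p, mem_union_left _ p.2⟩, fun p => y ⟨p, mem_union_right _ p.2⟩))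
    ?_ ?_ (Set.toFinite _)
  · rintro _ ⟨x, hx, rfl⟩
    exact ⟨⟨x, hx, rfl⟩, ⟨x, hx, rfl⟩⟩
  · intro y _ y' _ h
    funext ⟨p, hp⟩
    rcases mem_union.1 hp with hS | hT
    · exact congrFun (Prod.ext_iff.1 h).1 ⟨p, hS⟩
    · exact congrFun (Prod.ext_iff.1 h).2 ⟨p, hT⟩

lemma patternCount_image_add (hU : ∀ v : ℤ × ℤ, ∀ x ∈ U, (fun p => x (p + v)) ∈ U)
    (L : Finset (ℤ × ℤ)) (v : ℤ × ℤ) :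
    patternCount U (L.image (· + v)) = patternCount U L := by
  set pullback : (L.image (· + v) → A) → (L → A) :=
    fun y p => y ⟨p + v, mem_image_of_mem _ p.2⟩
  have hinj : Function.Injective pullback := by
    intro y y' h
    funext ⟨q, hq⟩
    obtain ⟨p, hp, rfl⟩ := mem_image.1 hq
    exact congrFun h ⟨p, hp⟩
  have himage : pullback '' patternSet U (L.image (· + v)) = patternSet U L := by
    ext y
    constructor
    · rintro ⟨_, ⟨x, hx, rfl⟩, rfl⟩
      exact ⟨fun p => x (p + v), hU v x hx, rfl⟩
    · rintro ⟨x, hx, rfl⟩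
      refine ⟨_, ⟨fun p => x (p + -v), hU (-v) x hx, rfl⟩, ?_⟩
      funext p
      simp [pullback]
  rw [patternCount_eq_ncard, patternCount_eq_ncard, ← himage,
    Set.ncard_image_of_injective _ hinj]

lemma patternCount_biUnion_le [Fintype A] (I : Finset (ℤ × ℤ)) (f : ℤ × ℤ → Finset (ℤ × ℤ))
    {C : ℕ} (hC : ∀ i ∈ I, patternCount U (f i) ≤ C) :
    patternCount U (I.biUnion f) ≤ C ^ #I := by
  classical
  induction I using Finset.induction_on with
  | empty => simpa using patternCount_le_card_pow (U := U) ∅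
  | insert a s ha ih =>
    rw [biUnion_insert, card_insert_of_notMem ha, pow_succ']
    exact (patternCount_union_le _ _).trans (Nat.mul_le_mul (hC a (mem_insert_self a s))
      (ih fun i hi => hC i (mem_insert_of_mem hi)))

end PatternCount

lemma mem_latBoundary_of_add_notMem {L : Finset (ℤ × ℤ)} {b e : ℤ × ℤ}
    (he : e = (1, 0) ∨ e = (0, 1)) (hb : b ∈ L) (hbe : b + e ∉ L) : b ∈ latBoundary L := by
  simp only [latBoundary, latInterior, Finset.mem_sdiff, Finset.mem_filter]
  refine ⟨hb, fun ⟨_, h10, h01, _⟩ => hbe ?_⟩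
  rcases he with rfl | rfl
  · rwa [show b + (1, 0) = (b.1 + 1, b.2) from Prod.ext rfl (add_zero _)]
  · rwa [show b + (0, 1) = (b.1, b.2 + 1) from Prod.ext (add_zero _) rfl]

lemma Int.exists_not_iff_succ {P : ℤ → Prop} {lo hi a b : ℤ} (ha : lo ≤ a ∧ a < hi)
    (hb : lo ≤ b ∧ b < hi) (hab : ¬(P a ↔ P b)) :
    ∃ i, lo ≤ i ∧ i + 1 < hi ∧ ¬(P i ↔ P (i + 1)) := by
  wlog hle : a ≤ b generalizing a b
  · exact this hb ha (fun h => hab h.symm) (le_of_not_ge hle)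
  induction b, hle using Int.leInduction with
  | base => exact absurd Iff.rfl hab
  | succ b hab' ih =>
    by_cases hstep : P b ↔ P (b + 1)
    · obtain ⟨i, h1, h2, h3⟩ := ih ⟨by omega, by omega⟩ (fun h => hab (h.trans hstep))
      exact ⟨i, h1, h2, h3⟩
    · exact ⟨b, by omega, hb.2, hstep⟩

lemma exists_adjacent_not_iff_mem_of_mem_Zrect {L : Finset (ℤ × ℤ)} {m n : ℕ} {c p q : ℤ × ℤ}
    (hp : p ∈ Zrect m n c) (hq : q ∈ Zrect m n c) (hpL : p ∈ L) (hqL : q ∉ L) :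
    ∃ u e : ℤ × ℤ, (e = (1, 0) ∨ e = (0, 1)) ∧ u ∈ Zrect m n c ∧ u + e ∈ Zrect m n c ∧
      ¬(u ∈ L ↔ u + e ∈ L) := by
  rw [mem_Zrect] at hp hq
  by_cases hcorner : (p.1, q.2) ∈ L
  · obtain ⟨i, h1, h2, h3⟩ := Int.exists_not_iff_succ (P := fun i => (i, q.2) ∈ L)
      ⟨hp.1, hp.2.1⟩ ⟨hq.1, hq.2.1⟩ (by simp [hcorner, hqL])
    refine ⟨(i, q.2), (1, 0), Or.inl rfl, ?_, ?_, by simpa using h3⟩ <;>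
      simp only [mem_Zrect, Prod.fst_add, Prod.snd_add] <;> omega
  · obtain ⟨j, h1, h2, h3⟩ := Int.exists_not_iff_succ (P := fun j => (p.1, j) ∈ L)
      ⟨hp.2.2.1, hp.2.2.2⟩ ⟨hq.2.2.1, hq.2.2.2⟩ (by simp [hcorner, hpL])
    refine ⟨(p.1, j), (0, 1), Or.inr rfl, ?_, ?_, by simpa using h3⟩ <;>
      simp only [mem_Zrect, Prod.fst_add, Prod.snd_add] <;> omega

def IsRunStart (L : Finset (ℤ × ℤ)) (e v b : ℤ × ℤ) : Prop :=
  v - e ∉ L ∧ ∃ n : ℕ, b = v + n • e ∧ ∀ i ≤ n, v + i • e ∈ L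

lemma le_of_add_nsmul_eq {L : Finset (ℤ × ℤ)} {e v v' : ℤ × ℤ} {n n' : ℕ} (hve : v - e ∉ L)
    (hrun' : ∀ i ≤ n', v' + i • e ∈ L) (h : v + n • e = v' + n' • e) : n' ≤ n := by
  by_contra! hlt
  obtain ⟨d, rfl⟩ := Nat.exists_eq_add_of_lt hlt
  refine hve ?_
  have hstep : v - e = v' + d • e := by
    rw [sub_eq_iff_eq_add]
    apply add_right_cancel (b := n • e)
    rw [h]
    simp only [add_smul, one_smul]
    abel
  exact hstep ▸ hrun' d (by omega)

lemma IsRunStart.eq {L : Finset (ℤ × ℤ)} {e v v' b : ℤ × ℤ} (h : IsRunStart L e v b)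
    (h' : IsRunStart L e v' b) : v = v' := by
  obtain ⟨hve, n, rfl, hrun⟩ := h
  obtain ⟨hve', n', hb, hrun'⟩ := h'
  obtain rfl : n = n' :=
    le_antisymm (le_of_add_nsmul_eq hve' hrun hb.symm) (le_of_add_nsmul_eq hve hrun' hb)
  exact add_right_cancel hb

lemma exists_isRunStart_add_notMem {L : Finset (ℤ × ℤ)} {e v : ℤ × ℤ} (he : e ≠ 0)
    (hv : v ∈ L) (hve : v - e ∉ L) : ∃ b, IsRunStart L e v b ∧ b ∈ L ∧ b + e ∉ L := by
  classical
  have hexit : ∃ n : ℕ, v + (n + 1) • e ∉ L := by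
    by_contra! hall
    have hinj : Function.Injective fun n : ℕ => v + (n + 1) • e := by
      intro n n' h
      have := congrArg (fun w => ((w - v) : ℤ × ℤ)) h
      simp only [add_sub_cancel_left, ← natCast_zsmul] at this
      exact Nat.succ_injective (Nat.cast_injective (smul_left_injective ℤ he this))
    exact Set.infinite_of_injective_forall_mem hinj hall L.finite_toSet
  set n := Nat.find hexit
  have hrun : ∀ i ≤ n, v + i • e ∈ L := by
    rintro (_ | i) hi
    · simpa using hv
    · exact not_not.1 (Nat.find_min hexit (by omega))
  refine ⟨v + n • e, ⟨hve, n, rfl, hrun⟩, hrun n le_rfl, ?_⟩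
  rw [add_assoc, ← succ_nsmul]
  exact Nat.find_spec hexit

section GridCells

variable {k l : ℕ}

def goodCells (k l : ℕ) (L : Finset (ℤ × ℤ)) : Finset (ℤ × ℤ) :=
  (L.image (gridCellIndex k l)).filter (fun ab => gridCell k l ab ⊆ L)

def badCells (k l : ℕ) (L : Finset (ℤ × ℤ)) : Finset (ℤ × ℤ) :=
  (L.image (gridCellIndex k l)).filter (fun ab => ¬ gridCell k l ab ⊆ L)

def IsChargedTo (k l : ℕ) (L : Finset (ℤ × ℤ)) (ab : ℤ × ℤ) (be : (ℤ × ℤ) × (ℤ × ℤ)) : Prop :=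
  if be.2 = 0 then be.1 ∈ gridCell k l ab else ∃ v ∈ gridCell k l ab, IsRunStart L be.2 v be.1

lemma exists_isChargedTo (hk : 0 < k) (hl : 0 < l) {L : Finset (ℤ × ℤ)} {ab : ℤ × ℤ}
    (hab : ab ∈ badCells k l L) :
    ∃ be ∈ latBoundary L ×ˢ ({0, (1, 0), (0, 1)} : Finset (ℤ × ℤ)), IsChargedTo k l L ab be := by
  simp only [badCells, Finset.mem_filter, mem_image] at hab
  obtain ⟨⟨p, hpL, rfl⟩, hsub⟩ := hab
  obtain ⟨q, hq, hqL⟩ := not_subset.1 hsub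
  obtain ⟨u, e, he, hu, hue, hmixed⟩ :=
    exists_adjacent_not_iff_mem_of_mem_Zrect ((mem_gridCell_iff hk hl).2 rfl) hq hpL hqL
  have he0 : e ≠ 0 := by rcases he with rfl | rfl <;> decide
  have hdir : e ∈ ({0, (1, 0), (0, 1)} : Finset (ℤ × ℤ)) := by rcases he with rfl | rfl <;> simp
  by_cases huL : u ∈ L
  · have hbd := mem_latBoundary_of_add_notMem he huL fun h => hmixed (iff_of_true huL h)
    exact ⟨(u, 0), mem_product.2 ⟨hbd, by simp⟩, by rw [IsChargedTo, if_pos rfl]; exact hu⟩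
  · obtain ⟨b, hrun, hbL, hbe⟩ :=
      exists_isRunStart_add_notMem he0 (not_not.1 fun h => hmixed (iff_of_false huL h))
        (by simpa using huL)
    refine ⟨(b, e), mem_product.2 ⟨mem_latBoundary_of_add_notMem he hbL hbe, hdir⟩, ?_⟩
    rw [IsChargedTo, if_neg he0]
    exact ⟨u + e, hue, hrun⟩

lemma IsChargedTo.eq (hk : 0 < k) (hl : 0 < l) {L : Finset (ℤ × ℤ)} {ab ab' : ℤ × ℤ}
    {be : (ℤ × ℤ) × (ℤ × ℤ)} (h : IsChargedTo k l L ab be) (h' : IsChargedTo k l L ab' be) :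
    ab = ab' := by
  unfold IsChargedTo at h h'
  split_ifs at h h'
  · rw [← (mem_gridCell_iff hk hl).1 h, ← (mem_gridCell_iff hk hl).1 h']
  · obtain ⟨v, hv, hrun⟩ := h
    obtain ⟨v', hv', hrun'⟩ := h'
    rw [← (mem_gridCell_iff hk hl).1 hv, ← (mem_gridCell_iff hk hl).1 hv', hrun.eq hrun']

lemma card_badCells_le (hk : 0 < k) (hl : 0 < l) (L : Finset (ℤ × ℤ)) :
    #(badCells k l L) ≤ 3 * #(latBoundary L) :=
  calc #(badCells k l L) ≤ #(latBoundary L ×ˢ ({0, (1, 0), (0, 1)} : Finset (ℤ × ℤ))) :=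
        card_le_card_of_forall_subsingleton (IsChargedTo k l L)
          (fun _ hab => exists_isChargedTo hk hl hab)
          (fun _ _ _ hab _ hab' => hab.2.eq hk hl hab'.2)
    _ = 3 * #(latBoundary L) := by rw [card_product, mul_comm]; rfl

lemma sdiff_gridPart_subset (hk : 0 < k) (hl : 0 < l) (L : Finset (ℤ × ℤ)) :
    L \ gridPart k l L ⊆ (badCells k l L).biUnion (gridCell k l) := by
  intro p hp
  obtain ⟨hpL, hpg⟩ := Finset.mem_sdiff.1 hp
  have hpcell : p ∈ gridCell k l (gridCellIndex k l p) := (mem_gridCell_iff hk hl).2 rfl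
  refine mem_biUnion.2 ⟨gridCellIndex k l p, ?_, hpcell⟩
  simp only [badCells, Finset.mem_filter, mem_image]
  exact ⟨⟨p, hpL, rfl⟩, fun hsub => hpg (Finset.mem_filter.2 ⟨hpL, _, _, hpcell, hsub⟩)⟩

lemma betaKL_le (hk : 0 < k) (hl : 0 < l) (L : Finset (ℤ × ℤ)) :
    betaKL k l L ≤ 3 * (k * l) * #(latBoundary L) :=
  calc betaKL k l L ≤ #((badCells k l L).biUnion (gridCell k l)) :=
        card_le_card (sdiff_gridPart_subset hk hl L)
    _ ≤ #(badCells k l L) * (k * l) :=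
        card_biUnion_le_card_mul _ _ _ fun _ _ => (card_Zrect k l _).le
    _ ≤ 3 * #(latBoundary L) * (k * l) := Nat.mul_le_mul_right _ (card_badCells_le hk hl L)
    _ = 3 * (k * l) * #(latBoundary L) := by ring

lemma gridPart_eq_biUnion_goodCells (hk : 0 < k) (hl : 0 < l) (L : Finset (ℤ × ℤ)) :
    gridPart k l L = (goodCells k l L).biUnion (gridCell k l) := by
  ext p
  simp only [gridPart, goodCells, Finset.mem_filter, mem_biUnion, mem_image]
  constructor
  · rintro ⟨hpL, a, b, hp, hsub⟩
    exact ⟨(a, b), ⟨⟨p, hpL, (mem_gridCell_iff hk hl).1 hp⟩, hsub⟩, hp⟩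
  · rintro ⟨ab, ⟨-, hsub⟩, hp⟩
    exact ⟨hsub hp, ab.1, ab.2, hp, hsub⟩

lemma alphaKL_eq_card_goodCells (hk : 0 < k) (hl : 0 < l) (L : Finset (ℤ × ℤ)) :
    alphaKL k l L = #(goodCells k l L) := by
  rw [alphaKL, ← Set.ncard_coe_finset]
  congr 1
  ext ab
  have hcorner : ((k : ℤ) * ab.1, (l : ℤ) * ab.2) ∈ gridCell k l ab :=
    mem_Zrect.2 ⟨le_rfl, by omega, le_rfl, by omega⟩
  simp only [goodCells, coe_filter, mem_image]
  exact ⟨fun hsub => ⟨⟨_, hsub hcorner, (mem_gridCell_iff hk hl).1 hcorner⟩, hsub⟩, fun h => h.2⟩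

lemma alphaKL_mul_le_card (hk : 0 < k) (hl : 0 < l) (L : Finset (ℤ × ℤ)) :
    alphaKL k l L * (k * l) ≤ #L := by
  have hdisj : (goodCells k l L : Set (ℤ × ℤ)).PairwiseDisjoint (gridCell k l) :=
    fun ab _ ab' _ hne => disjoint_left.2 fun p hp hp' =>
      hne (((mem_gridCell_iff hk hl).1 hp).symm.trans ((mem_gridCell_iff hk hl).1 hp'))
  calc alphaKL k l L * (k * l) = ∑ ab ∈ goodCells k l L, #(gridCell k l ab) := by
        simp [alphaKL_eq_card_goodCells hk hl, gridCell, card_Zrect]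
    _ = #(gridPart k l L) := by rw [gridPart_eq_biUnion_goodCells hk hl, card_biUnion hdisj]
    _ ≤ #L := card_le_card (filter_subset _ _)

end GridCells

lemma patternCount_le_pow_mul_pow {A : Type*} [Fintype A] {U : Set ((ℤ × ℤ) → A)}
    (hU : ∀ v : ℤ × ℤ, ∀ x ∈ U, (fun p => x (p + v)) ∈ U) {k l : ℕ} (hk : 0 < k) (hl : 0 < l)
    (L : Finset (ℤ × ℤ)) :
    patternCount U L ≤
      patternCount U (Zrect k l (0, 0)) ^ alphaKL k l L * Fintype.card A ^ betaKL k l L := by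
  have hgrid : patternCount U (gridPart k l L) ≤
      patternCount U (Zrect k l (0, 0)) ^ alphaKL k l L := by
    rw [gridPart_eq_biUnion_goodCells hk hl, alphaKL_eq_card_goodCells hk hl]
    exact patternCount_biUnion_le _ _ fun ab _ => by
      rw [gridCell, Zrect_eq_image_add, patternCount_image_add hU]
  calc patternCount U L = patternCount U (gridPart k l L ∪ (L \ gridPart k l L)) := by
        rw [union_sdiff_of_subset (show gridPart k l L ⊆ L from filter_subset _ _)]
    _ ≤ patternCount U (gridPart k l L) * patternCount U (L \ gridPart k l L) :=
        patternCount_union_le _ _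
    _ ≤ _ := Nat.mul_le_mul hgrid (patternCount_le_card_pow _)

lemma log_patternCount_le {A : Type*} [Fintype A] {U : Set ((ℤ × ℤ) → A)} (hne : U.Nonempty)
    (hU : ∀ v : ℤ × ℤ, ∀ x ∈ U, (fun p => x (p + v)) ∈ U) {k l : ℕ} (hk : 0 < k) (hl : 0 < l)
    (L : Finset (ℤ × ℤ)) :
    Real.log (patternCount U L) ≤
      #L * (1 / ((k * l : ℕ) : ℝ) * Real.log (patternCount U (Zrect k l (0, 0)))) +
        3 * (k * l) * Real.log (Fintype.card A) * #(latBoundary L) := by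
  have : Nonempty A := ⟨hne.some (0, 0)⟩
  have hΓ₀ : (0 : ℝ) < patternCount U (Zrect k l (0, 0)) := by
    exact_mod_cast patternCount_pos hne _
  have hN : (0 : ℝ) < Fintype.card A := by exact_mod_cast Fintype.card_pos
  have hα : (alphaKL k l L : ℝ) ≤ #L * (1 / ((k * l : ℕ) : ℝ)) := by
    rw [mul_one_div, le_div_iff₀ (by positivity)]
    exact_mod_cast alphaKL_mul_le_card hk hl L
  have hβ : (betaKL k l L : ℝ) ≤ 3 * (k * l) * #(latBoundary L) := by
    exact_mod_cast betaKL_le hk hl L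
  calc Real.log (patternCount U L)
      ≤ Real.log ((patternCount U (Zrect k l (0, 0)) ^ alphaKL k l L *
          Fintype.card A ^ betaKL k l L : ℕ) : ℝ) :=
        Real.log_le_log (by exact_mod_cast patternCount_pos hne L)
          (by exact_mod_cast patternCount_le_pow_mul_pow hU hk hl L)
    _ = alphaKL k l L * Real.log (patternCount U (Zrect k l (0, 0))) +
          betaKL k l L * Real.log (Fintype.card A) := by
        push_cast
        rw [Real.log_mul (by positivity) (by positivity), Real.log_pow, Real.log_pow]
    _ ≤ _ := by
        rw [← mul_assoc]
        exact add_le_add (mul_le_mul_of_nonneg_right hα (Real.log_natCast_nonneg _))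
          (by nlinarith [Real.log_natCast_nonneg (Fintype.card A)])

lemma limsup_le_of_le_add_mul {ι : Type*} {F : Filter ι} {f r : ι → ℝ} {C c : ℝ}
    (hf : F.IsCoboundedUnder (· ≤ ·) f) (hr : F.IsBoundedUnder (· ≤ ·) r) (hr0 : limsup r F = 0)
    (hc : 0 ≤ c) (h : ∀ i, f i ≤ C + c * r i) : limsup f F ≤ C := by
  refine le_of_forall_pos_le_add fun ε hε => limsup_le_of_le hf ?_
  have hδ : 0 < ε / (c + 1) := by positivity
  have hcδ : c * (ε / (c + 1)) ≤ ε := by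
    rw [mul_div_assoc', div_le_iff₀ (by positivity)]
    linarith
  filter_upwards [eventually_lt_of_limsup_lt (hr0 ▸ hδ) hr] with i hi
  linarith [h i, mul_le_mul_of_nonneg_left hi.le hc]

lemma entropyAlong_le_of_limsup_boundary_eq_zero {A : Type*} [Fintype A]
    {U : Set ((ℤ × ℤ) → A)} (hne : U.Nonempty)
    (hU : ∀ v : ℤ × ℤ, ∀ x ∈ U, (fun p => x (p + v)) ∈ U) {Ω : ℕ → Finset (ℤ × ℤ)}
    (hbd : limsup (fun n => (#(latBoundary (Ω n)) : ℝ) / #(Ω n)) atTop = 0)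
    {k l : ℕ} (hk : 0 < k) (hl : 0 < l) :
    entropyAlong U Ω ≤ 1 / ((k * l : ℕ) : ℝ) * Real.log (patternCount U (Zrect k l (0, 0))) := by
  refine limsup_le_of_le_add_mul
    (isCoboundedUnder_le_of_le atTop fun n => mul_nonneg (by positivity) (Real.log_natCast_nonneg _))
    (isBoundedUnder_of ⟨1, fun n => div_le_one_of_le₀
      (by exact_mod_cast card_le_card (sdiff_subset (s := Ω n))) (by positivity)⟩)
    hbd (c := 3 * (k * l) * Real.log (Fintype.card A)) (by positivity) fun n => ?_
  set C := 1 / ((k * l : ℕ) : ℝ) * Real.log (patternCount U (Zrect k l (0, 0)))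
  have hC : 0 ≤ C := mul_nonneg (by positivity) (Real.log_natCast_nonneg _)
  calc 1 / (#(Ω n) : ℝ) * Real.log (patternCount U (Ω n))
      ≤ 1 / (#(Ω n) : ℝ) * (#(Ω n) * C +
          3 * (k * l) * Real.log (Fintype.card A) * #(latBoundary (Ω n))) :=
        mul_le_mul_of_nonneg_left (log_patternCount_le hne hU hk hl _) (by positivity)
    _ = (#(Ω n) / #(Ω n) : ℝ) * C +
          3 * (k * l) * Real.log (Fintype.card A) * (#(latBoundary (Ω n)) / #(Ω n)) := by ring
    _ ≤ _ := by grw [div_self_le_one, one_mul]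

theorem entropyAlong_le_rectEntropy_general {A : Type*} [Fintype A] [TopologicalSpace A]
    (U : Set ((ℤ × ℤ) → A)) (hU : IsShiftSpace U)
    (Ω : ℕ → Finset (ℤ × ℤ))
    (hbd : Filter.limsup
      (fun n => ((latBoundary (Ω n)).card : ℝ) / ((Ω n).card : ℝ)) Filter.atTop = 0) :
    entropyAlong U Ω ≤ rectEntropy U :=
  le_ciInf fun mn =>
    entropyAlong_le_of_limsup_boundary_eq_zero hU.1 hU.2.2 hbd mn.1.succ_pos mn.2.succ_pos

/-- Theorem 1.1, first part: if `limsup |∂Ω(n)|/|Ω(n)| = 0`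
then `h_Ω(U) ≤ h_r(U)`. -/
theorem entropyAlong_le_rectEntropy {A : Type*} [Fintype A] [TopologicalSpace A]
    [DiscreteTopology A] (hcard : 2 ≤ Fintype.card A)
    (U : Set ((ℤ × ℤ) → A)) (hU : IsShiftSpace U)
    (Ω : ℕ → Finset (ℤ × ℤ)) (hΩ : IsExpandingSystem Ω)
    (hbd : Filter.limsup
      (fun n => ((latBoundary (Ω n)).card : ℝ) / ((Ω n).card : ℝ)) Filter.atTop = 0) :
    entropyAlong U Ω ≤ rectEntropy U :=
  entropyAlong_le_rectEntropy_general U hU Ω hbd
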